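/- arXiv:1905.09195 — 3 statements merged into one kernel-verified Lean document; each statement's English description precedes it below -/
import Mathlib

section
/- Let g : [0,1] → ℝ be nondecreasing with g(0) = 0, and for k ≥ 1 define the step function g_k := ∑_{i=1}^{k} (g(i/k) − g((i−1)/k))·1_{[i/k,1]}. Then ∫_0^1 (g_k(t) − g(t))² dt ≤ g(1)²/k. -/
open MeasureTheory Finset

/-- For `g : [0,1] → ℝ` nondecreasing with `g 0 = 0` and the step approximation
`g_k = ∑_{i=1}^k (g(i/k) − g((i−1)/k)) 1_{[i/k,1]}`, one has
`∫₀¹ (g_k − g)² ≤ g(1)²/k`. -/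
theorem stmt_7 (g : ℝ → ℝ) (hg : MonotoneOn g (Set.Icc 0 1)) (hg0 : g 0 = 0)
    (k : ℕ) (hk : 1 ≤ k) :
    (∫ t in Set.Icc (0 : ℝ) 1,
        ((∑ i ∈ Finset.range k,
            (g (((i : ℝ) + 1) / k) - g ((i : ℝ) / k)) *
              (Set.Icc (((i : ℝ) + 1) / k) 1).indicator (fun _ => (1 : ℝ)) t) - g t) ^ 2)
      ≤ g 1 ^ 2 / k := by
  have hk0 : (0:ℝ) < k := by exact_mod_cast hk
  set Δ : ℕ → ℝ := fun i => g (((i:ℝ)+1)/k) - g ((i:ℝ)/k) with hΔdef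
  have hΔeq : ∀ i : ℕ, g (((i:ℝ)+1)/k) - g ((i:ℝ)/k) = Δ i := fun i => by rw [hΔdef]
  have hmem : ∀ i : ℕ, i ≤ k → ((i:ℝ)/k) ∈ Set.Icc (0:ℝ) 1 := by
    intro i hi
    constructor
    · positivity
    · rw [div_le_one hk0]; exact_mod_cast hi
  have hmem' : ∀ i : ℕ, i < k → (((i:ℝ)+1)/k) ∈ Set.Icc (0:ℝ) 1 := by
    intro i hi
    have := hmem (i+1) hi
    push_cast at this
    exact this
  have hΔ0 : ∀ i, i < k → 0 ≤ Δ i := by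
    intro i hi
    rw [hΔdef]
    have : ((i:ℝ)/k) ≤ ((i:ℝ)+1)/k := by gcongr; linarith
    simpa using sub_nonneg.mpr (hg (hmem i hi.le) (hmem' i hi) this)
  have h01 : (0:ℝ) ∈ Set.Icc (0:ℝ) 1 := ⟨le_refl _, zero_le_one⟩
  have h11 : (1:ℝ) ∈ Set.Icc (0:ℝ) 1 := ⟨zero_le_one, le_refl _⟩
  have hg1 : 0 ≤ g 1 := hg0 ▸ hg h01 h11 zero_le_one
  have hΔle : ∀ i, i < k → Δ i ≤ g 1 := by
    intro i hi
    rw [hΔdef]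
    have h1 : g (((i:ℝ)+1)/k) ≤ g 1 := hg (hmem' i hi) h11 (hmem' i hi).2
    have h2 : 0 ≤ g ((i:ℝ)/k) := hg0 ▸ hg h01 (hmem i hi.le) (hmem i hi.le).1
    simp only
    linarith
  have hsum : ∑ i ∈ range k, Δ i = g 1 := by
    have h1 := Finset.sum_range_sub (fun i : ℕ => g ((i:ℝ)/k)) k
    calc ∑ i ∈ range k, Δ i
        = ∑ i ∈ range k, (g ((((i+1:ℕ)):ℝ)/k) - g ((i:ℝ)/k)) := by
          apply Finset.sum_congr rfl; intro i _; rw [hΔdef]; push_cast; ring_nf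
      _ = g ((k:ℝ)/k) - g (((0:ℕ):ℝ)/k) := h1
      _ = g 1 := by rw [div_self hk0.ne']; simp [hg0]
  -- pointwise bound
  have key : ∀ t ∈ Set.Icc (0:ℝ) 1,
      ((∑ i ∈ range k, Δ i * (Set.Icc (((i:ℝ)+1)/k) 1).indicator (fun _ => (1:ℝ)) t) - g t)^2
        ≤ ∑ i ∈ range k, (Set.Ico ((i:ℝ)/k) (((i:ℝ)+1)/k)).indicator (fun _ => Δ i ^ 2) t := by
    intro t ht
    have hRHS0 : 0 ≤ ∑ i ∈ range k,
        (Set.Ico ((i:ℝ)/k) (((i:ℝ)+1)/k)).indicator (fun _ => Δ i ^ 2) t :=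
      Finset.sum_nonneg fun i _ => Set.indicator_nonneg (fun _ _ => sq_nonneg _) t
    rcases ht.2.lt_or_eq with h1 | h1
    · -- t < 1 case
      set j := ⌊t * (k:ℝ)⌋₊ with hjdef
      have htk0 : 0 ≤ t * (k:ℝ) := mul_nonneg ht.1 hk0.le
      have hj1 : (j:ℝ) ≤ t * k := Nat.floor_le htk0
      have hj2 : t * k < (j:ℝ) + 1 := Nat.lt_floor_add_one _
      have hjk : j < k := by
        rw [hjdef, Nat.floor_lt htk0]
        calc t * (k:ℝ) < 1 * k := by
              apply mul_lt_mul_of_pos_right h1 hk0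
          _ = k := one_mul _
      have hjt : (j:ℝ)/k ≤ t := (div_le_iff₀ hk0).mpr hj1
      have htj : t < ((j:ℝ)+1)/k := (lt_div_iff₀ hk0).mpr hj2
      have hgk : (∑ i ∈ range k, Δ i * (Set.Icc (((i:ℝ)+1)/k) 1).indicator (fun _ => (1:ℝ)) t)
          = g ((j:ℝ)/k) := by
        have step : ∀ i ∈ range k,
            Δ i * (Set.Icc (((i:ℝ)+1)/k) 1).indicator (fun _ => (1:ℝ)) t
            = if i < j then Δ i else 0 := by
          intro i _
          by_cases hij : i < j
          · rw [Set.indicator_of_mem, if_pos hij, mul_one]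
            refine ⟨?_, ht.2⟩
            rw [div_le_iff₀ hk0]
            have hcast : (i:ℝ) + 1 ≤ (j:ℝ) := by exact_mod_cast hij
            linarith
          · rw [Set.indicator_of_notMem, if_neg hij, mul_zero]
            intro hmem2
            have h2 := hmem2.1
            rw [div_le_iff₀ hk0] at h2
            have hcast : (j:ℝ) ≤ (i:ℝ) := by exact_mod_cast Nat.not_lt.mp hij
            linarith
        rw [Finset.sum_congr rfl step, ← Finset.sum_filter]
        have hfil : (range k).filter (· < j) = range j := by
          ext x; simp only [Finset.mem_filter, Finset.mem_range]; omega
        rw [hfil]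
        have h2 := Finset.sum_range_sub (fun i : ℕ => g ((i:ℝ)/k)) j
        calc ∑ i ∈ range j, Δ i
            = ∑ i ∈ range j, (g ((((i+1:ℕ)):ℝ)/k) - g ((i:ℝ)/k)) := by
              apply Finset.sum_congr rfl; intro i _; rw [hΔdef]; push_cast; ring_nf
          _ = g ((j:ℝ)/k) - g (((0:ℕ):ℝ)/k) := h2
          _ = g ((j:ℝ)/k) := by simp [hg0]
      rw [hgk]
      have hmono1 : g ((j:ℝ)/k) ≤ g t := hg (hmem j hjk.le) ht hjt
      have hmono2 : g t ≤ g (((j:ℝ)+1)/k) := hg ht (hmem' j hjk) htj.le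
      have hbound : (g ((j:ℝ)/k) - g t)^2 ≤ Δ j ^2 := by
        apply sq_le_sq'
        · rw [hΔdef]; simp only; linarith
        · have := hΔ0 j hjk; linarith
      refine le_trans hbound ?_
      have hind : (Set.Ico ((j:ℝ)/k) (((j:ℝ)+1)/k)).indicator (fun _ => Δ j ^ 2) t = Δ j ^2 :=
        Set.indicator_of_mem (Set.mem_Ico.mpr ⟨hjt, htj⟩) _
      rw [← hind]
      exact Finset.single_le_sum
        (f := fun (i : ℕ) => (Set.Ico ((i:ℝ)/k) (((i:ℝ)+1)/k)).indicator (fun _ => Δ i ^ 2) t)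
        (fun i _ => Set.indicator_nonneg (fun _ _ => sq_nonneg _) t)
        (Finset.mem_range.mpr hjk)
    · -- t = 1 case
      subst h1
      have hgk : (∑ i ∈ range k, Δ i * (Set.Icc (((i:ℝ)+1)/k) 1).indicator (fun _ => (1:ℝ)) (1:ℝ))
          = g 1 := by
        rw [← hsum]
        apply Finset.sum_congr rfl
        intro i hi
        rw [Set.indicator_of_mem
          (Set.mem_Icc.mpr ⟨(hmem' i (Finset.mem_range.mp hi)).2, le_refl (1:ℝ)⟩), mul_one]
      rw [hgk]
      simpa using hRHS0
  -- integrability of the step majorant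
  have hHint : Integrable
      (fun t => ∑ i ∈ range k, (Set.Ico ((i:ℝ)/k) (((i:ℝ)+1)/k)).indicator (fun _ => Δ i ^ 2) t)
      (volume.restrict (Set.Icc (0:ℝ) 1)) := by
    apply integrable_finset_sum
    intro i _
    rw [integrable_indicator_iff measurableSet_Ico]
    apply (integrableOn_const_iff (C := Δ i ^ 2)).mpr
    right
    calc (volume.restrict (Set.Icc (0:ℝ) 1)) (Set.Ico ((i:ℝ)/k) (((i:ℝ)+1)/k))
        = volume (Set.Ico ((i:ℝ)/k) (((i:ℝ)+1)/k) ∩ Set.Icc 0 1) :=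
          Measure.restrict_apply measurableSet_Ico
      _ ≤ volume (Set.Ico ((i:ℝ)/k) (((i:ℝ)+1)/k)) := measure_mono Set.inter_subset_left
      _ < ⊤ := by rw [Real.volume_Ico]; exact ENNReal.ofReal_lt_top
  -- value of the majorant's integral
  have hHval : (∫ t in Set.Icc (0:ℝ) 1,
      ∑ i ∈ range k, (Set.Ico ((i:ℝ)/k) (((i:ℝ)+1)/k)).indicator (fun _ => Δ i ^ 2) t)
      = ∑ i ∈ range k, Δ i ^ 2 * (1/k) := by
    rw [integral_finset_sum]
    · apply Finset.sum_congr rfl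
      intro i hi
      rw [integral_indicator_const _ measurableSet_Ico, Measure.real,
        Measure.restrict_apply measurableSet_Ico]
      have hik : i < k := Finset.mem_range.mp hi
      have hsub : Set.Ico ((i:ℝ)/k) (((i:ℝ)+1)/k) ∩ Set.Icc 0 1
          = Set.Ico ((i:ℝ)/k) (((i:ℝ)+1)/k) := by
        apply Set.inter_eq_self_of_subset_left
        intro x hx
        exact ⟨le_trans (hmem i hik.le).1 hx.1, le_trans hx.2.le (hmem' i hik).2⟩
      rw [hsub, Real.volume_Ico]
      have hdiff : ((i:ℝ)+1)/k - (i:ℝ)/k = 1/k := by field_simp; ring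
      rw [hdiff, ENNReal.toReal_ofReal (by positivity)]
      rw [smul_eq_mul]; ring
    · intro i _
      rw [integrable_indicator_iff measurableSet_Ico]
      apply (integrableOn_const_iff (C := Δ i ^ 2)).mpr
      right
      calc (volume.restrict (Set.Icc (0:ℝ) 1)) (Set.Ico ((i:ℝ)/k) (((i:ℝ)+1)/k))
          = volume (Set.Ico ((i:ℝ)/k) (((i:ℝ)+1)/k) ∩ Set.Icc 0 1) :=
            Measure.restrict_apply measurableSet_Ico
        _ ≤ volume (Set.Ico ((i:ℝ)/k) (((i:ℝ)+1)/k)) := measure_mono Set.inter_subset_left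
        _ < ⊤ := by rw [Real.volume_Ico]; exact ENNReal.ofReal_lt_top
  have hfinal : ∑ i ∈ range k, Δ i ^ 2 * (1/k) ≤ g 1 ^ 2 / k := by
    have hle : ∑ i ∈ range k, Δ i ^ 2 * (1/k) ≤ ∑ i ∈ range k, Δ i * g 1 * (1/k) := by
      apply Finset.sum_le_sum
      intro i hi
      have h0 := hΔ0 i (Finset.mem_range.mp hi)
      have hle' := hΔle i (Finset.mem_range.mp hi)
      have h1k : (0:ℝ) ≤ 1/k := by positivity
      apply mul_le_mul_of_nonneg_right _ h1k
      rw [sq]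
      exact mul_le_mul_of_nonneg_left hle' h0
    refine le_trans hle ?_
    have : ∑ i ∈ range k, Δ i * g 1 * (1/k) = (∑ i ∈ range k, Δ i) * (g 1 * (1/k)) := by
      rw [Finset.sum_mul]
      apply Finset.sum_congr rfl
      intro i _; ring
    rw [this, hsum, sq]
    field_simp
    exact le_rfl
  calc (∫ t in Set.Icc (0 : ℝ) 1,
        ((∑ i ∈ Finset.range k,
            (g (((i : ℝ) + 1) / k) - g ((i : ℝ) / k)) *
              (Set.Icc (((i : ℝ) + 1) / k) 1).indicator (fun _ => (1 : ℝ)) t) - g t) ^ 2)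
      = (∫ t in Set.Icc (0:ℝ) 1,
        ((∑ i ∈ range k, Δ i * (Set.Icc (((i:ℝ)+1)/k) 1).indicator (fun _ => (1:ℝ)) t) - g t)^2) := rfl
    _ ≤ ∫ t in Set.Icc (0:ℝ) 1,
        ∑ i ∈ range k, (Set.Ico ((i:ℝ)/k) (((i:ℝ)+1)/k)).indicator (fun _ => Δ i ^ 2) t := by
        apply integral_mono_of_nonneg
        · exact ae_of_all _ fun t => sq_nonneg _
        · exact hHint
        · exact (ae_restrict_iff' measurableSet_Icc).mpr (ae_of_all _ key)
    _ = ∑ i ∈ range k, Δ i ^ 2 * (1/k) := hHval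
    _ ≤ g 1 ^ 2 / k := hfinal
end

section
/- The closed convex hull (in L²([0,1])) of the class J_k(C) of piecewise constant functions with at most k jumps contains the class BV(C) of functions of total variation at most C with |f(0)| ≤ C; i.e., every f ∈ BV(C) is an L²-limit of finite convex combinations of elements of J_k(C). -/
open MeasureTheory Set

noncomputable def approx (f : ℝ → ℝ) (N : ℕ) : ℝ → ℝ :=
  fun x => f 0 + ∑ j : Fin N, (f (((j : ℕ) + 1 : ℝ) / N) - f ((j : ℕ) / N)) *
    (Set.Icc (((j : ℕ) + 1 : ℝ) / N) 1).indicator (fun _ => (1 : ℝ)) x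

lemma approx_eq (f : ℝ → ℝ) (N : ℕ) (hN : 0 < N) {x : ℝ} (hx : x ∈ Set.Icc (0:ℝ) 1) :
    approx f N x = f ((⌊(N : ℝ) * x⌋₊ : ℝ) / N) := by
  have hNR : (0:ℝ) < N := by exact_mod_cast hN
  set K := ⌊(N : ℝ) * x⌋₊ with hK
  have hKN : K ≤ N := by
    have : (N:ℝ) * x ≤ (N:ℝ) := by nlinarith [hx.1, hx.2]
    calc K ≤ ⌊(N:ℝ)⌋₊ := Nat.floor_le_floor this
    _ = N := Nat.floor_natCast N
  have hind : ∀ j : Fin N,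
      (f (((j : ℕ) + 1 : ℝ) / N) - f ((j : ℕ) / N)) *
        (Set.Icc (((j : ℕ) + 1 : ℝ) / N) 1).indicator (fun _ => (1 : ℝ)) x
      = if ((j : ℕ) : ℕ) < K then f (((j : ℕ) + 1 : ℝ) / N) - f ((j : ℕ) / N) else 0 := by
    intro j
    have hiff : x ∈ Set.Icc (((j : ℕ) + 1 : ℝ) / N) 1 ↔ ((j : ℕ) : ℕ) < K := by
      constructor
      · intro hmem
        have : ((j : ℕ) + 1 : ℝ) ≤ (N:ℝ) * x := by
          have := hmem.1
          rw [div_le_iff₀ hNR] at this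
          linarith
        have := Nat.le_floor (by exact_mod_cast this : (((j:ℕ)+1 : ℕ) : ℝ) ≤ (N:ℝ)*x)
        omega
      · intro hlt
        constructor
        · rw [div_le_iff₀ hNR]
          have h1 : ((j:ℕ) + 1 : ℕ) ≤ K := hlt
          have h2 : (((j:ℕ)+1 : ℕ) : ℝ) ≤ K := by exact_mod_cast h1
          have h3 : (K : ℝ) ≤ (N:ℝ)*x := Nat.floor_le (by nlinarith [hx.1] : (0:ℝ) ≤ (N:ℝ)*x)
          push_cast at h2 ⊢
          linarith
        · exact hx.2
    by_cases h : ((j : ℕ) : ℕ) < K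
    · rw [Set.indicator_of_mem (hiff.2 h), if_pos h, mul_one]
    · rw [Set.indicator_of_notMem (fun hm => h (hiff.1 hm)), if_neg h, mul_zero]
  have hsum : ∑ j ∈ Finset.range N,
      (if j < K then f (((j:ℝ) + 1) / N) - f ((j : ℝ) / N) else 0)
      = f ((K:ℝ)/N) - f 0 := by
    rw [← Finset.sum_subset (Finset.range_subset_range.2 hKN)
      (by
        intro j hj hnj
        simp only [Finset.mem_range, not_lt] at hnj
        rw [if_neg (by omega)])]
    rw [Finset.sum_congr rfl (fun j hj => if_pos (Finset.mem_range.1 hj))]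
    have h2 := Finset.sum_range_sub (f := fun j : ℕ => f ((j:ℝ)/N)) K
    push_cast at h2
    rw [h2, zero_div]
  unfold approx
  rw [Finset.sum_congr rfl (fun j _ => hind j),
    Fin.sum_univ_eq_sum_range (fun j : ℕ => if j < K then f (((j:ℝ) + 1) / N) - f ((j : ℝ) / N) else 0) N,
    hsum]
  ring

lemma abs_sub_le_of_eVar {f : ℝ → ℝ} {s : Set ℝ} {D : ℝ} (hD : 0 ≤ D)
    (h : eVariationOn f s ≤ ENNReal.ofReal D) {x y : ℝ} (hx : x ∈ s) (hy : y ∈ s) :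
    |f x - f y| ≤ D := by
  have h2 := (eVariationOn.edist_le f hx hy).trans h
  rw [edist_dist] at h2
  rw [← Real.dist_eq]
  exact (ENNReal.ofReal_le_ofReal_iff hD).1 h2

lemma var_sum (f : ℝ → ℝ) (C : ℝ) (hC : 0 ≤ C)
    (hfTV : eVariationOn f (Set.Icc 0 1) ≤ ENNReal.ofReal C) (N : ℕ) (hN : 0 < N) :
    ∑ j ∈ Finset.range N, |f (((j:ℝ) + 1) / N) - f ((j:ℝ) / N)| ≤ C := by
  have hNR : (0:ℝ) < N := by exact_mod_cast hN
  set u : ℕ → ℝ := fun i => ((min i N : ℕ) : ℝ) / N with hu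
  have humono : Monotone u := by
    intro i j hij
    have h1 : ((min i N : ℕ) : ℝ) ≤ ((min j N : ℕ) : ℝ) := by
      exact_mod_cast min_le_min hij le_rfl
    simp only [hu]
    gcongr
  have humem : ∀ i, u i ∈ Set.Icc (0:ℝ) 1 := by
    intro i
    constructor
    · positivity
    · rw [div_le_one hNR]
      exact_mod_cast min_le_right i N
  have hsum := eVariationOn.sum_le (f := f) (n := N) humono humem
  have hterm : ∀ j ∈ Finset.range N,
      (ENNReal.ofReal |f (((j:ℝ) + 1) / N) - f ((j:ℝ) / N)|)
        = edist (f (u (j+1))) (f (u j)) := by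
    intro j hj
    have hjN : j < N := Finset.mem_range.1 hj
    have e1 : u j = (j:ℝ)/N := by
      simp only [hu, min_eq_left hjN.le]
    have e2 : u (j+1) = ((j:ℝ)+1)/N := by
      simp only [hu, min_eq_left (by omega : j + 1 ≤ N)]
      push_cast
      ring
    rw [e1, e2, edist_dist, Real.dist_eq]
  have key : ∑ j ∈ Finset.range N, ENNReal.ofReal |f (((j:ℝ) + 1) / N) - f ((j:ℝ) / N)|
      ≤ ENNReal.ofReal C := by
    rw [Finset.sum_congr rfl hterm]
    exact hsum.trans hfTV
  have := ENNReal.toReal_mono ENNReal.ofReal_ne_top key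
  rw [ENNReal.toReal_ofReal hC] at this
  rw [ENNReal.toReal_sum (fun j _ => ENNReal.ofReal_ne_top)] at this
  refine le_trans (le_of_eq ?_) this
  apply Finset.sum_congr rfl
  intro j _
  rw [ENNReal.toReal_ofReal (abs_nonneg _)]

lemma var_pieces (f : ℝ → ℝ) (N : ℕ) (hN : 0 < N) :
    ∑ j ∈ Finset.range N, eVariationOn f (Set.Icc ((j:ℝ)/N) (((j:ℝ)+1)/N))
      = eVariationOn f (Set.Icc 0 1) := by
  have hNR : (0:ℝ) < N := by exact_mod_cast hN
  have claim : ∀ n, ∑ j ∈ Finset.range n, eVariationOn f (Set.Icc ((j:ℝ)/N) (((j:ℝ)+1)/N))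
      = eVariationOn f (Set.Icc 0 ((n:ℝ)/N)) := by
    intro n
    induction n with
    | zero =>
      simp only [Finset.range_zero, Finset.sum_empty, Nat.cast_zero, zero_div, Set.Icc_self]
      exact (eVariationOn.subsingleton f Set.subsingleton_singleton).symm
    | succ n ih =>
      have h1 : (0:ℝ) ≤ (n:ℝ)/N := by positivity
      have h2 : (n:ℝ)/N ≤ ((n:ℝ)+1)/N := by gcongr; linarith
      have key := eVariationOn.Icc_add_Icc f (s := Set.univ) h1 h2 (Set.mem_univ _)
      simp only [Set.univ_inter] at key
      rw [Finset.sum_range_succ, ih, key]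
      congr 2
      push_cast
      ring_nf
  have := claim N
  rwa [div_self hNR.ne'] at this

lemma integral_bound (f : ℝ → ℝ) (C : ℝ) (hC : 0 < C)
    (hfTV : eVariationOn f (Set.Icc 0 1) ≤ ENNReal.ofReal C) (N : ℕ) (hN : 0 < N) :
    ∫ x in Set.Icc (0:ℝ) 1, (approx f N x - f x) ^ 2 ≤ C ^ 2 / N := by
  have hNR : (0:ℝ) < N := by exact_mod_cast hN
  set g : ℝ → ℝ := fun x => (approx f N x - f x) ^ 2 with hg
  -- measurability
  have hbv : LocallyBoundedVariationOn f (Set.Icc (0:ℝ) 1) :=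
    BoundedVariationOn.locallyBoundedVariationOn
      (lt_of_le_of_lt hfTV ENNReal.ofReal_lt_top).ne
  obtain ⟨p, q, hp, hq, hpq⟩ := hbv.exists_monotoneOn_sub_monotoneOn
  have hfae : AEMeasurable f (volume.restrict (Set.Icc (0:ℝ) 1)) := by
    rw [hpq]
    exact (aemeasurable_restrict_of_monotoneOn measurableSet_Icc hp).sub
      (aemeasurable_restrict_of_monotoneOn measurableSet_Icc hq)
  have hameas : Measurable (approx f N) := by
    unfold approx
    exact measurable_const.add (Finset.measurable_sum _ fun j _ =>
      (measurable_const.indicator measurableSet_Icc).const_mul _)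
  have hgmeas : AEStronglyMeasurable g (volume.restrict (Set.Icc (0:ℝ) 1)) :=
    ((hameas.aemeasurable.sub hfae).pow_const 2).aestronglyMeasurable
  -- global bound and integrability
  have hfloor : ∀ x ∈ Set.Icc (0:ℝ) 1, ((⌊(N:ℝ)*x⌋₊ : ℝ)/N) ∈ Set.Icc (0:ℝ) 1 := by
    intro x hx
    constructor
    · positivity
    · rw [div_le_one hNR]
      have h1 : (N:ℝ) * x ≤ (N:ℝ) := by nlinarith [hx.1, hx.2]
      have := (Nat.floor_le_floor h1).trans_eq (Nat.floor_natCast N)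
      exact_mod_cast this
  have hgb : ∀ x ∈ Set.Icc (0:ℝ) 1, ‖g x‖ ≤ C ^ 2 := by
    intro x hx
    have e : g x = |f ((⌊(N:ℝ)*x⌋₊:ℝ)/N) - f x| ^ 2 := by
      simp only [hg]
      rw [approx_eq f N hN hx, ← sq_abs]
    rw [e, Real.norm_eq_abs, abs_of_nonneg (sq_nonneg _)]
    exact pow_le_pow_left₀ (abs_nonneg _)
      (abs_sub_le_of_eVar hC.le hfTV (hfloor x hx) hx) 2
  have hgint : IntegrableOn g (Set.Icc (0:ℝ) 1) volume :=
    Integrable.mono' (show IntegrableOn (fun _ : ℝ => C ^ 2) (Set.Icc (0:ℝ) 1) volume from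
        integrableOn_const measure_Icc_lt_top.ne) hgmeas
      ((ae_restrict_iff' measurableSet_Icc).2 (Filter.Eventually.of_forall hgb))
  -- piecewise variation
  set V : ℕ → ENNReal := fun j => eVariationOn f (Set.Icc ((j:ℝ)/N) (((j:ℝ)+1)/N)) with hV
  have hVsum : ∑ j ∈ Finset.range N, V j = eVariationOn f (Set.Icc 0 1) := var_pieces f N hN
  have hVle : ∀ j ∈ Finset.range N, V j ≤ ENNReal.ofReal C := fun j hj =>
    (Finset.single_le_sum (f := V) (fun _ _ => zero_le) hj).trans (hVsum ▸ hfTV)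
  have hVne : ∀ j ∈ Finset.range N, V j ≠ ⊤ := fun j hj =>
    ((hVle j hj).trans_lt ENNReal.ofReal_lt_top).ne
  set v : ℕ → ℝ := fun j => (V j).toReal with hv
  have hv0 : ∀ j, 0 ≤ v j := fun j => ENNReal.toReal_nonneg
  have hvsum : ∑ j ∈ Finset.range N, v j ≤ C := by
    have h1 : (∑ j ∈ Finset.range N, V j).toReal ≤ C := by
      rw [hVsum]
      have := ENNReal.toReal_mono ENNReal.ofReal_ne_top hfTV
      rwa [ENNReal.toReal_ofReal hC.le] at this
    rwa [ENNReal.toReal_sum hVne] at h1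
  -- splitting the integral
  have hle : ∀ j : ℕ, (j:ℝ)/N ≤ ((j:ℝ)+1)/N := by
    intro j; gcongr; linarith
  have hsub : ∀ j, j < N → Set.Ioc ((j:ℝ)/N) (((j:ℝ)+1)/N) ⊆ Set.Icc (0:ℝ) 1 := by
    intro j hj x hx
    have hx1 := hx.1
    have hx2 := hx.2
    have hj1 : ((j:ℝ)+1) ≤ (N:ℝ) := by exact_mod_cast (by omega : j + 1 ≤ N)
    constructor
    · have : (0:ℝ) ≤ (j:ℝ)/N := by positivity
      linarith
    · calc x ≤ ((j:ℝ)+1)/N := hx2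
        _ ≤ (N:ℝ)/N := by gcongr
        _ = 1 := div_self hNR.ne'
  have hint : ∀ j, j < N →
      IntervalIntegrable g volume (((j:ℕ):ℝ)/N) (((j+1:ℕ):ℝ)/N) := by
    intro j hj
    have heq : (((j+1:ℕ)):ℝ)/N = ((j:ℝ)+1)/N := by push_cast; ring_nf
    rw [heq]
    exact (intervalIntegrable_iff_integrableOn_Ioc_of_le (hle j)).2
      (hgint.mono_set (hsub j hj))
  have esum := intervalIntegral.sum_integral_adjacent_intervals
    (a := fun i : ℕ => ((i:ℕ):ℝ)/N) (μ := volume) (f := g) (n := N) hint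
  have emain : ∫ x in Set.Icc (0:ℝ) 1, g x
      = ∑ j ∈ Finset.range N, ∫ x in (((j:ℕ):ℝ)/N)..((((j+1:ℕ)):ℝ)/N), g x := by
    rw [esum, integral_Icc_eq_integral_Ioc, ← intervalIntegral.integral_of_le zero_le_one]
    norm_num [div_self hNR.ne']
  -- per-piece bound
  have hpiece : ∀ j ∈ Finset.range N,
      ∫ x in (((j:ℕ):ℝ)/N)..((((j+1:ℕ)):ℝ)/N), g x ≤ v j ^ 2 * (1/N) := by
    intro j hjm
    have hj : j < N := Finset.mem_range.1 hjm
    have heq : (((j+1:ℕ)):ℝ)/N = ((j:ℝ)+1)/N := by push_cast; ring_nf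
    rw [heq]
    have hub : ∀ x ∈ Set.uIoc ((j:ℝ)/N) (((j:ℝ)+1)/N), ‖g x‖ ≤ v j ^ 2 := by
      intro x hx
      rw [Set.uIoc_of_le (hle j)] at hx
      have hxI : x ∈ Set.Icc (0:ℝ) 1 := hsub j hj hx
      set K := ⌊(N:ℝ)*x⌋₊ with hK
      have hK1 : j ≤ K := by
        apply Nat.le_floor
        have := hx.1
        rw [div_lt_iff₀ hNR] at this
        nlinarith
      have hK2 : K ≤ j + 1 := by
        have hxle : (N:ℝ) * x ≤ ((j:ℝ)+1) := by
          have := hx.2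
          rw [le_div_iff₀ hNR] at this
          nlinarith
        have h2 : ((j:ℝ)+1) = (((j+1:ℕ)):ℝ) := by push_cast; ring_nf
        rw [h2] at hxle
        have := (Nat.floor_le_floor hxle).trans_eq (Nat.floor_natCast (j+1))
        exact this
      have hc1 : (j:ℝ) ≤ (K:ℝ) := by exact_mod_cast hK1
      have hc2 : (K:ℝ) ≤ (j:ℝ)+1 := by exact_mod_cast hK2
      have hKmem : ((K:ℝ)/N) ∈ Set.Icc ((j:ℝ)/N) (((j:ℝ)+1)/N) := ⟨by gcongr, by gcongr⟩
      have hxmem : x ∈ Set.Icc ((j:ℝ)/N) (((j:ℝ)+1)/N) := ⟨hx.1.le, hx.2⟩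
      have hVj : eVariationOn f (Set.Icc ((j:ℝ)/N) (((j:ℝ)+1)/N)) ≤ ENNReal.ofReal (v j) := by
        rw [hv]
        simp only []
        rw [ENNReal.ofReal_toReal (hVne j hjm)]
      have e : g x = |f ((K:ℝ)/N) - f x| ^ 2 := by
        simp only [hg]
        rw [approx_eq f N hN hxI, ← sq_abs, hK]
      rw [e, Real.norm_eq_abs, abs_of_nonneg (sq_nonneg _)]
      exact pow_le_pow_left₀ (abs_nonneg _)
        (abs_sub_le_of_eVar (hv0 j) hVj hKmem hxmem) 2
    calc ∫ x in ((j:ℝ)/N)..(((j:ℝ)+1)/N), g x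
        ≤ ‖∫ x in ((j:ℝ)/N)..(((j:ℝ)+1)/N), g x‖ := le_abs_self _
      _ ≤ v j ^ 2 * |(((j:ℝ)+1)/N) - ((j:ℝ)/N)| :=
          intervalIntegral.norm_integral_le_of_norm_le_const hub
      _ = v j ^ 2 * (1/N) := by
          congr 1
          rw [div_sub_div_same]
          norm_num
  -- conclude
  have hsum2 : ∑ j ∈ Finset.range N, v j ^ 2 ≤ C ^ 2 := by
    have hS0 : 0 ≤ ∑ j ∈ Finset.range N, v j := Finset.sum_nonneg fun j _ => hv0 j
    calc ∑ j ∈ Finset.range N, v j ^ 2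
        ≤ ∑ j ∈ Finset.range N, v j * (∑ i ∈ Finset.range N, v i) := by
          apply Finset.sum_le_sum
          intro j hj
          rw [sq]
          exact mul_le_mul_of_nonneg_left (Finset.single_le_sum (fun i _ => hv0 i) hj) (hv0 j)
      _ = (∑ j ∈ Finset.range N, v j) ^ 2 := by rw [← Finset.sum_mul, sq]
      _ ≤ C ^ 2 := pow_le_pow_left₀ hS0 hvsum 2
  calc ∫ x in Set.Icc (0:ℝ) 1, g x
      = ∑ j ∈ Finset.range N, ∫ x in (((j:ℕ):ℝ)/N)..((((j+1:ℕ)):ℝ)/N), g x := emain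
    _ ≤ ∑ j ∈ Finset.range N, v j ^ 2 * (1/N) := Finset.sum_le_sum hpiece
    _ = (∑ j ∈ Finset.range N, v j ^ 2) * (1/N) := by rw [← Finset.sum_mul]
    _ ≤ C ^ 2 * (1/N) := by
        apply mul_le_mul_of_nonneg_right hsum2 (by positivity)
    _ = C ^ 2 / N := by ring

/-- The class `J_k(C)` of piecewise constant functions with at most `k` jumps. -/
def Jk (k : ℕ) (C : ℝ) : Set (ℝ → ℝ) :=
  {u | ∃ (a0 : ℝ) (a : Fin k → ℝ) (t : Fin k → ℝ),
    (∀ i, t i ∈ Set.Ioc (0 : ℝ) 1) ∧ |a0| ≤ C ∧ (∑ i, |a i|) ≤ C ∧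
    u = fun x => a0 + ∑ i, a i * (Set.Icc (t i) 1).indicator (fun _ => (1 : ℝ)) x}

lemma step_mem_convexHull (k : ℕ) (hk : 1 ≤ k) (C : ℝ) (hC : 0 < C)
    (a0 : ℝ) (ha0 : |a0| ≤ C) {N : ℕ} (a : Fin N → ℝ) (t : Fin N → ℝ)
    (ht : ∀ j, t j ∈ Set.Ioc (0:ℝ) 1) (ha : (∑ j, |a j|) ≤ C) :
    (fun x => a0 + ∑ j, a j * (Set.Icc (t j) 1).indicator (fun _ => (1 : ℝ)) x)
      ∈ convexHull ℝ (Jk k C) := by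
  set i0 : Fin k := ⟨0, hk⟩ with hi0
  set T : ℝ := ∑ j, |a j| with hT
  have hT0 : 0 ≤ T := Finset.sum_nonneg fun j _ => abs_nonneg _
  -- constant functions are in Jk
  have hconst : ∀ b : ℝ, |b| ≤ C → (fun _ : ℝ => b) ∈ Jk k C := by
    intro b hb
    refine ⟨b, 0, fun _ => 1, fun i => ⟨one_pos, le_refl 1⟩, hb, by simpa using hC.le, ?_⟩
    funext x; simp
  rcases eq_or_lt_of_le hT0 with hTz | hTpos
  · -- all coefficients vanish
    have hz : ∀ j, a j = 0 := by
      intro j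
      have := Finset.sum_eq_zero_iff_of_nonneg (fun j _ => abs_nonneg (a j)) |>.1 hTz.symm
      exact abs_eq_zero.1 (this j (Finset.mem_univ j))
    have : (fun x => a0 + ∑ j, a j * (Set.Icc (t j) 1).indicator (fun _ => (1 : ℝ)) x)
        = fun _ : ℝ => a0 := by
      funext x; simp [hz]
    rw [this]
    exact subset_convexHull ℝ _ (hconst a0 ha0)
  · -- convex combination of single-jump functions
    set sgn : Fin N → ℝ := fun j => if 0 ≤ a j then 1 else -1 with hsgn
    have hsgn_abs : ∀ j, |a j| * sgn j = a j := by
      intro j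
      by_cases h : 0 ≤ a j
      · simp [hsgn, h, abs_of_nonneg h]
      · simp [hsgn, h, abs_of_neg (lt_of_not_ge h)]
    set u : Fin N → (ℝ → ℝ) := fun j => fun x =>
      a0 + (sgn j * T) * (Set.Icc (t j) 1).indicator (fun _ => (1 : ℝ)) x with hu
    have hTC : T ≤ C := ha
    have hsgnT : ∀ j, |sgn j * T| = T := by
      intro j
      rw [abs_mul]
      have : |sgn j| = 1 := by by_cases h : 0 ≤ a j <;> simp [hsgn, h]
      rw [this, one_mul, abs_of_nonneg hT0]
    have humem : ∀ j, u j ∈ Jk k C := by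
      intro j
      refine ⟨a0, fun i => if i = i0 then sgn j * T else 0,
        fun i => if i = i0 then t j else 1, ?_, ha0, ?_, ?_⟩
      · intro i; by_cases h : i = i0 <;> simp [h, ht j, (ht j).1, (ht j).2]
      · have : ∀ i : Fin k, |if i = i0 then sgn j * T else 0|
            = if i = i0 then |sgn j * T| else 0 := by
          intro i; by_cases h : i = i0 <;> simp [h]
        rw [Finset.sum_congr rfl (fun i _ => this i), Finset.sum_ite_eq' Finset.univ i0]
        simp [hsgnT j, hTC]
      · funext x
        have : ∀ i : Fin k,
            (if i = i0 then sgn j * T else 0) *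
              (Set.Icc (if i = i0 then t j else 1) 1).indicator (fun _ => (1 : ℝ)) x
            = if i = i0 then (sgn j * T) * (Set.Icc (t j) 1).indicator (fun _ => (1 : ℝ)) x
              else 0 := by
          intro i; by_cases h : i = i0 <;> simp [h]
        rw [hu]
        simp only []
        rw [Finset.sum_congr rfl (fun i _ => this i), Finset.sum_ite_eq' Finset.univ i0]
        simp
    have hcm : Finset.univ.centerMass (fun j => |a j|) u
        = (fun x => a0 + ∑ j, a j * (Set.Icc (t j) 1).indicator (fun _ => (1 : ℝ)) x) := by
      rw [Finset.centerMass]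
      funext x
      rw [← hT]
      simp only [Pi.smul_apply, Finset.sum_apply, smul_eq_mul]
      have hterm : ∀ j : Fin N, |a j| * u j x
          = |a j| * a0 + (a j * (Set.Icc (t j) 1).indicator (fun _ => (1 : ℝ)) x) * T := by
        intro j
        simp only [hu]
        calc |a j| * (a0 + sgn j * T * (Set.Icc (t j) 1).indicator (fun _ => (1 : ℝ)) x)
            = |a j| * a0 + (|a j| * sgn j) *
              (T * (Set.Icc (t j) 1).indicator (fun _ => (1 : ℝ)) x) := by ring
          _ = |a j| * a0 + (a j * (Set.Icc (t j) 1).indicator (fun _ => (1 : ℝ)) x) * T := by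
              rw [hsgn_abs j]; ring
      rw [Finset.sum_congr rfl (fun j _ => hterm j), Finset.sum_add_distrib,
        ← Finset.sum_mul, ← Finset.sum_mul, ← hT]
      field_simp
    rw [← hcm]
    exact Finset.centerMass_mem_convexHull Finset.univ (fun j _ => abs_nonneg (a j))
      (by rw [← hT]; exact hTpos) (fun j _ => humem j)


/-- The closed convex hull (in `L²([0,1])`) of `J_k(C)` contains `BV(C)`: every `f` with
`|f 0| ≤ C` and total variation at most `C` on `[0,1]` is an `L²`-limit of finite convex
combinations of elements of `J_k(C)`. -/
theorem stmt_8 (k : ℕ) (hk : 1 ≤ k) (C : ℝ) (hC : 0 < C) (f : ℝ → ℝ)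
    (hf0 : |f 0| ≤ C) (hfTV : eVariationOn f (Set.Icc 0 1) ≤ ENNReal.ofReal C) :
    ∃ h : ℕ → ℝ → ℝ,
      (∀ m, h m ∈ convexHull ℝ (Jk k C)) ∧
      Filter.Tendsto (fun m => ∫ t in Set.Icc (0 : ℝ) 1, (h m t - f t) ^ 2)
        Filter.atTop (nhds 0) := by
  refine ⟨fun m => approx f (m+1), fun m => ?_, ?_⟩
  · have hN : 0 < m + 1 := Nat.succ_pos m
    have hNR : (0:ℝ) < ((m+1:ℕ):ℝ) := by exact_mod_cast hN
    have ht : ∀ j : Fin (m+1), (((j:ℕ):ℝ)+1)/((m+1:ℕ):ℝ) ∈ Set.Ioc (0:ℝ) 1 := by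
      intro j
      constructor
      · positivity
      · rw [div_le_one hNR]
        exact_mod_cast Nat.succ_le_of_lt j.isLt
    have ha : (∑ j : Fin (m+1),
        |f ((((j:ℕ):ℝ)+1)/((m+1:ℕ):ℝ)) - f (((j:ℕ):ℝ)/((m+1:ℕ):ℝ))|) ≤ C := by
      rw [Fin.sum_univ_eq_sum_range
        (fun j : ℕ => |f (((j:ℝ)+1)/((m+1:ℕ):ℝ)) - f ((j:ℝ)/((m+1:ℕ):ℝ))|) (m+1)]
      exact var_sum f C hC.le hfTV (m+1) hN
    exact step_mem_convexHull k hk C hC (f 0) hf0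
      (fun j : Fin (m+1) => f ((((j:ℕ):ℝ)+1)/((m+1:ℕ):ℝ)) - f (((j:ℕ):ℝ)/((m+1:ℕ):ℝ)))
      (fun j : Fin (m+1) => (((j:ℕ):ℝ)+1)/((m+1:ℕ):ℝ)) ht ha
  · refine squeeze_zero (g := fun m : ℕ => C^2 / ((m:ℝ)+1))
      (fun m => integral_nonneg fun x => sq_nonneg _) (fun m => ?_) ?_
    · have := integral_bound f C hC hfTV (m+1) (Nat.succ_pos m)
      have hcast : ((m+1:ℕ):ℝ) = (m:ℝ)+1 := by push_cast; ring_nf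
      rw [hcast] at this
      exact this
    · have h1 := tendsto_one_div_add_atTop_nhds_zero_nat.const_mul (C^2)
      simp only [mul_zero, mul_one_div] at h1
      exact h1
end

section
/- Two ReLU networks with the same architecture whose corresponding weights and biases differ by at most ε in the sup-entry norm produce functions differing by at most ε(L+1)B^L(D+1)^{L+1} in the sup norm over [0,1]^d. -/
/-- Forward pass of a ReLU network (hidden-layer output after `k+1` ReLU layers). -/
noncomputable def nnForward (d D : ℕ) (W0 : Fin D → Fin d → ℝ)
    (W : ℕ → Fin D → Fin D → ℝ) (v : ℕ → Fin D → ℝ) (x : Fin d → ℝ) : ℕ → Fin D → ℝ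
  | 0 => fun j => max (∑ l, W0 j l * x l - v 0 j) 0
  | (k + 1) => fun j => max (∑ l, W (k + 1) j l * nnForward d D W0 W v x k l - v (k + 1) j) 0

private lemma abs_relu_le (a : ℝ) : |max a 0| ≤ |a| := by
  rw [abs_of_nonneg (le_max_right a 0)]
  exact max_le (le_abs_self a) (abs_nonneg a)

private lemma sum_abs_le' {n : ℕ} (f : Fin n → ℝ) (c : ℝ) (h : ∀ i, |f i| ≤ c) :
    |∑ i, f i| ≤ (n : ℝ) * c := by
  calc |∑ i, f i| ≤ ∑ i, |f i| := Finset.abs_sum_le_sum_abs _ _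
    _ ≤ ∑ _i : Fin n, c := Finset.sum_le_sum (fun i _ => h i)
    _ = (n : ℝ) * c := by simp [Finset.sum_const, nsmul_eq_mul]

/-- Parameter-perturbation stability of ReLU networks: two networks of the same
architecture (`L` hidden layers, width `D ≥ d`, all parameters bounded by `B ≥ 1`) whose
corresponding weights and biases differ entrywise by at most `ε` produce functions
differing by at most `ε(L+1)B^L(D+1)^{L+1}` uniformly on `[0,1]^d`. -/
theorem stmt_13 (d L D : ℕ) (B ε : ℝ) (hB : 1 ≤ B) (hdD : d ≤ D) (hL : 1 ≤ L)
    (hε : 0 ≤ ε)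
    (W0 W0' : Fin D → Fin d → ℝ) (W W' : ℕ → Fin D → Fin D → ℝ)
    (v v' : ℕ → Fin D → ℝ) (wout wout' : Fin D → ℝ)
    (hW0 : ∀ j l, |W0 j l| ≤ B) (hW0' : ∀ j l, |W0' j l| ≤ B)
    (hW : ∀ k, k < L → ∀ j l, |W k j l| ≤ B) (hW' : ∀ k, k < L → ∀ j l, |W' k j l| ≤ B)
    (hv : ∀ k, k < L → ∀ j, |v k j| ≤ B) (hv' : ∀ k, k < L → ∀ j, |v' k j| ≤ B)
    (hwout : ∀ j, |wout j| ≤ B) (hwout' : ∀ j, |wout' j| ≤ B)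
    (hdW0 : ∀ j l, |W0 j l - W0' j l| ≤ ε)
    (hdW : ∀ k, k < L → ∀ j l, |W k j l - W' k j l| ≤ ε)
    (hdv : ∀ k, k < L → ∀ j, |v k j - v' k j| ≤ ε)
    (hdwout : ∀ j, |wout j - wout' j| ≤ ε) :
    ∀ x ∈ Set.Icc (0 : Fin d → ℝ) 1,
      |(∑ j, wout j * nnForward d D W0 W v x (L - 1) j)
          - (∑ j, wout' j * nnForward d D W0' W' v' x (L - 1) j)|
        ≤ ε * (L + 1) * B ^ L * ((D : ℝ) + 1) ^ (L + 1) := by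
  intro x hx
  have hx0 : ∀ l, (0:ℝ) ≤ x l := fun l => by simpa using hx.1 l
  have hx1 : ∀ l, x l ≤ 1 := fun l => by simpa using hx.2 l
  have hxb : ∀ l, |x l| ≤ 1 := fun l => abs_le.2 ⟨by linarith [hx0 l], hx1 l⟩
  have hD0 : (0:ℝ) ≤ (D:ℝ) := Nat.cast_nonneg D
  have hdR : (d:ℝ) ≤ (D:ℝ) := Nat.cast_le.2 hdD
  have hB0 : (0:ℝ) ≤ B := le_trans zero_le_one hB
  have hC1 : (1:ℝ) ≤ B * ((D:ℝ)+1) := by nlinarith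
  -- bound on hidden layers of the first network (same proof applies to both)
  have hA : ∀ (U0 : Fin D → Fin d → ℝ) (U : ℕ → Fin D → Fin D → ℝ) (u : ℕ → Fin D → ℝ),
      (∀ j l, |U0 j l| ≤ B) → (∀ k, k < L → ∀ j l, |U k j l| ≤ B) →
      (∀ k, k < L → ∀ j, |u k j| ≤ B) →
      ∀ k, k < L → ∀ j, |nnForward d D U0 U u x k j| ≤ (B * ((D:ℝ)+1)) ^ (k+1) := by
    intro U0 U u hU0 hU hu k
    induction k with
    | zero =>
      intro hk j
      simp only [nnForward]
      refine (abs_relu_le _).trans ?_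
      have h1 : |∑ l, U0 j l * x l| ≤ (d:ℝ) * B := by
        apply sum_abs_le'
        intro l
        rw [abs_mul]
        calc |U0 j l| * |x l| ≤ B * 1 :=
              mul_le_mul (hU0 j l) (hxb l) (abs_nonneg _) hB0
          _ = B := mul_one B
      have h2 : |u 0 j| ≤ B := hu 0 hk j
      calc |∑ l, U0 j l * x l - u 0 j| ≤ |∑ l, U0 j l * x l| + |u 0 j| := abs_sub _ _
        _ ≤ (d:ℝ) * B + B := by linarith
        _ ≤ (B * ((D:ℝ)+1)) ^ (0+1) := by rw [pow_one]; nlinarith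
    | succ k ih =>
      intro hk j
      have hk' : k < L := by omega
      simp only [nnForward]
      refine (abs_relu_le _).trans ?_
      have hpow : (1:ℝ) ≤ (B * ((D:ℝ)+1)) ^ (k+1) := one_le_pow₀ hC1
      have h1 : |∑ l, U (k+1) j l * nnForward d D U0 U u x k l|
          ≤ (D:ℝ) * (B * (B * ((D:ℝ)+1)) ^ (k+1)) := by
        apply sum_abs_le'
        intro l
        rw [abs_mul]
        exact mul_le_mul (hU (k+1) hk j l) (ih hk' l) (abs_nonneg _) hB0
      have h2 : |u (k+1) j| ≤ B := hu (k+1) hk j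
      calc |∑ l, U (k+1) j l * nnForward d D U0 U u x k l - u (k+1) j|
          ≤ |∑ l, U (k+1) j l * nnForward d D U0 U u x k l| + |u (k+1) j| := abs_sub _ _
        _ ≤ (D:ℝ) * (B * (B * ((D:ℝ)+1)) ^ (k+1)) + B := by linarith
        _ ≤ (B * ((D:ℝ)+1)) ^ (k+1+1) := by
            conv_rhs => rw [pow_succ]
            nlinarith [mul_nonneg hB0 (sub_nonneg.2 hpow)]
  have hA1 := hA W0 W v hW0 hW hv
  have hA2 := hA W0' W' v' hW0' hW' hv'
  -- difference bound on hidden layers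
  have hBnd : ∀ k, k < L → ∀ j,
      |nnForward d D W0 W v x k j - nnForward d D W0' W' v' x k j|
        ≤ ε * ((k:ℝ)+1) * B ^ k * ((D:ℝ)+1) ^ (k+1) := by
    intro k
    induction k with
    | zero =>
      intro hk j
      simp only [nnForward]
      refine (abs_max_sub_max_le_abs _ _ 0).trans ?_
      have h1 : |∑ l, W0 j l * x l - ∑ l, W0' j l * x l| ≤ (d:ℝ) * ε := by
        rw [← Finset.sum_sub_distrib]
        apply sum_abs_le'
        intro l
        rw [← sub_mul, abs_mul]
        calc |W0 j l - W0' j l| * |x l| ≤ ε * 1 :=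
              mul_le_mul (hdW0 j l) (hxb l) (abs_nonneg _) hε
          _ = ε := mul_one ε
      have h2 : |v 0 j - v' 0 j| ≤ ε := hdv 0 hk j
      calc |(∑ l, W0 j l * x l - v 0 j) - (∑ l, W0' j l * x l - v' 0 j)|
          = |(∑ l, W0 j l * x l - ∑ l, W0' j l * x l) - (v 0 j - v' 0 j)| := by ring_nf
        _ ≤ |∑ l, W0 j l * x l - ∑ l, W0' j l * x l| + |v 0 j - v' 0 j| := abs_sub _ _
        _ ≤ (d:ℝ) * ε + ε := by linarith
        _ ≤ ε * ((0:ℕ):ℝ) * B ^ 0 * ((D:ℝ)+1) ^ (0+1) + ε * B ^ 0 * ((D:ℝ)+1) ^ (0+1) := by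
            norm_num
            nlinarith [mul_nonneg hε (sub_nonneg.2 hdR)]
        _ = ε * (((0:ℕ):ℝ)+1) * B ^ 0 * ((D:ℝ)+1) ^ (0+1) := by ring
    | succ k ih =>
      intro hk j
      have hk' : k < L := by omega
      simp only [nnForward]
      refine (abs_max_sub_max_le_abs _ _ 0).trans ?_
      set f := nnForward d D W0 W v x k with hf
      set f' := nnForward d D W0' W' v' x k with hf'
      have hfb : ∀ l, |f l| ≤ (B * ((D:ℝ)+1)) ^ (k+1) := hA1 k hk'
      have hdf : ∀ l, |f l - f' l| ≤ ε * ((k:ℝ)+1) * B ^ k * ((D:ℝ)+1) ^ (k+1) := ih hk'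
      have h1 : |∑ l, W (k+1) j l * f l - ∑ l, W' (k+1) j l * f' l|
          ≤ (D:ℝ) * (ε * (B * ((D:ℝ)+1)) ^ (k+1)
              + B * (ε * ((k:ℝ)+1) * B ^ k * ((D:ℝ)+1) ^ (k+1))) := by
        rw [← Finset.sum_sub_distrib]
        apply sum_abs_le'
        intro l
        have : W (k+1) j l * f l - W' (k+1) j l * f' l
            = (W (k+1) j l - W' (k+1) j l) * f l + W' (k+1) j l * (f l - f' l) := by ring
        rw [this]
        refine (abs_add_le _ _).trans ?_
        rw [abs_mul, abs_mul]
        have t1 : |W (k+1) j l - W' (k+1) j l| * |f l| ≤ ε * (B * ((D:ℝ)+1)) ^ (k+1) :=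
          mul_le_mul (hdW (k+1) hk j l) (hfb l) (abs_nonneg _) hε
        have t2 : |W' (k+1) j l| * |f l - f' l|
            ≤ B * (ε * ((k:ℝ)+1) * B ^ k * ((D:ℝ)+1) ^ (k+1)) :=
          mul_le_mul (hW' (k+1) hk j l) (hdf l) (abs_nonneg _) hB0
        linarith
      have h2 : |v (k+1) j - v' (k+1) j| ≤ ε := hdv (k+1) hk j
      have hpowB : (1:ℝ) ≤ B ^ (k+1) := one_le_pow₀ hB
      have hpowD : (1:ℝ) ≤ ((D:ℝ)+1) ^ (k+1) := one_le_pow₀ (by linarith)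
      have hk0 : (0:ℝ) ≤ (k:ℝ) := Nat.cast_nonneg k
      calc |(∑ l, W (k+1) j l * f l - v (k+1) j) - (∑ l, W' (k+1) j l * f' l - v' (k+1) j)|
          = |(∑ l, W (k+1) j l * f l - ∑ l, W' (k+1) j l * f' l)
              - (v (k+1) j - v' (k+1) j)| := by ring_nf
        _ ≤ |∑ l, W (k+1) j l * f l - ∑ l, W' (k+1) j l * f' l|
              + |v (k+1) j - v' (k+1) j| := abs_sub _ _
        _ ≤ (D:ℝ) * (ε * (B * ((D:ℝ)+1)) ^ (k+1)
              + B * (ε * ((k:ℝ)+1) * B ^ k * ((D:ℝ)+1) ^ (k+1))) + ε := by linarith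
        _ ≤ ε * (((k:ℝ)+1)+1) * B ^ (k+1) * ((D:ℝ)+1) ^ (k+1+1) := by
            have hP : (1:ℝ) ≤ B^(k+1) * ((D:ℝ)+1)^(k+1) := by nlinarith [hpowB, hpowD]
            have h2P : (1:ℝ) ≤ ((k:ℝ)+2) * (B^(k+1) * ((D:ℝ)+1)^(k+1)) := by
              nlinarith [hP, mul_nonneg hk0 (zero_le_one.trans hP)]
            have key := mul_nonneg hε (sub_nonneg.2 h2P)
            rw [mul_pow]
            ring_nf
            ring_nf at key
            nlinarith [key]
        _ = ε * ((((k+1:ℕ)):ℝ)+1) * B ^ (k+1) * ((D:ℝ)+1) ^ (k+1+1) := by push_cast; ring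
  -- final output layer
  have hL1 : L - 1 + 1 = L := Nat.succ_pred_eq_of_pos hL
  have hcast : (((L-1:ℕ)):ℝ) = (L:ℝ) - 1 := by
    push_cast [hL1]
    have : ((L - 1 + 1 : ℕ) : ℝ) = (L:ℝ) := by rw [hL1]
    push_cast at this
    linarith
  set f := nnForward d D W0 W v x (L-1) with hf
  set f' := nnForward d D W0' W' v' x (L-1) with hf'
  have hfb : ∀ j, |f j| ≤ (B * ((D:ℝ)+1)) ^ L := by
    intro j
    have := hA1 (L-1) (by omega) j
    rwa [hL1] at this
  have hdf : ∀ j, |f j - f' j| ≤ ε * (L:ℝ) * B ^ (L-1) * ((D:ℝ)+1) ^ L := by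
    intro j
    have := hBnd (L-1) (by omega) j
    rw [hL1, hcast] at this
    convert this using 2
    ring
  have h1 : |∑ j, wout j * f j - ∑ j, wout' j * f' j|
      ≤ (D:ℝ) * (ε * (B * ((D:ℝ)+1)) ^ L + B * (ε * (L:ℝ) * B ^ (L-1) * ((D:ℝ)+1) ^ L)) := by
    rw [← Finset.sum_sub_distrib]
    apply sum_abs_le'
    intro j
    have : wout j * f j - wout' j * f' j
        = (wout j - wout' j) * f j + wout' j * (f j - f' j) := by ring
    rw [this]
    refine (abs_add_le _ _).trans ?_
    rw [abs_mul, abs_mul]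
    have t1 : |wout j - wout' j| * |f j| ≤ ε * (B * ((D:ℝ)+1)) ^ L :=
      mul_le_mul (hdwout j) (hfb j) (abs_nonneg _) hε
    have t2 : |wout' j| * |f j - f' j| ≤ B * (ε * (L:ℝ) * B ^ (L-1) * ((D:ℝ)+1) ^ L) :=
      mul_le_mul (hwout' j) (hdf j) (abs_nonneg _) hB0
    linarith
  have hBB : B * B ^ (L-1) = B ^ L := by
    rw [← pow_succ', hL1]
  have hL0 : (0:ℝ) ≤ (L:ℝ) := Nat.cast_nonneg L
  have hpowB : (0:ℝ) ≤ B ^ L := pow_nonneg hB0 L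
  have hpowD : (0:ℝ) ≤ ((D:ℝ)+1) ^ L := pow_nonneg (by linarith) L
  calc |∑ j, wout j * f j - ∑ j, wout' j * f' j|
      ≤ (D:ℝ) * (ε * (B * ((D:ℝ)+1)) ^ L + B * (ε * (L:ℝ) * B ^ (L-1) * ((D:ℝ)+1) ^ L)) := h1
    _ = (D:ℝ) * (ε * (B^L * ((D:ℝ)+1)^L) + ε * (L:ℝ) * B ^ L * ((D:ℝ)+1) ^ L) := by
        rw [mul_pow, ← hBB]; ring
    _ ≤ ε * ((L:ℝ) + 1) * B ^ L * ((D:ℝ)+1) ^ (L+1) := by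
        rw [pow_succ]
        have key : (0:ℝ) ≤ ε * (((L:ℝ)+1) * (B^L * ((D:ℝ)+1)^L)) :=
          mul_nonneg hε (mul_nonneg (by linarith) (mul_nonneg hpowB hpowD))
        nlinarith [key]
end
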